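/- Let m ≥ 2, d ≥ 1 be integers, 1 ≤ p < ∞, and let Ψ be a Schwartz function on ℝ^{md}. Set Ψ_j(z) = 2^{jmd}Ψ(2^j z) for an integer j ≥ 0. Then there is a constant C depending only on Ψ, m, d, p such that for every G ∈ L^p(ℝ^{md}) the diagonal restriction of Ψ_j ∗ G satisfies (∫_{ℝ^d} |(Ψ_j ∗ G)(x,x,…,x)|^p dx)^{1/p} ≤ C·2^{j(m−1)d/p}·‖G‖_{L^p(ℝ^{md})}. -/

import Mathlib

open MeasureTheory Metric Filter SchwartzMap
open scoped ENNReal NNReal RealInnerProductSpace FourierTransform BigOperators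

noncomputable section

/-- The diagonal point `(x,…,x) ∈ ℝ^{md}`. -/
def diagPt {m d : ℕ} (x : EuclideanSpace ℝ (Fin d)) :
    EuclideanSpace ℝ (Fin m × Fin d) := WithLp.toLp 2 (fun q : Fin m × Fin d => x q.2)

/-- The dilate `Ψ_j(z) = 2^{jmd} Ψ(2^j z)`. -/
def dilate {m d : ℕ} (Ψ : EuclideanSpace ℝ (Fin m × Fin d) → ℂ) (j : ℕ)
    (z : EuclideanSpace ℝ (Fin m × Fin d)) : ℂ :=
  (2 ^ (j * (m * d)) : ℂ) * Ψ ((2 : ℝ) ^ j • z)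

section Aux

/-- weighted Jensen via Hölder -/
lemma holder_weight {α : Type*} [MeasurableSpace α] (μ : Measure α) {p : ℝ} (hp : 1 ≤ p)
    (g ψ : α → ℝ≥0∞) (hg : AEMeasurable g μ) (hψ : AEMeasurable ψ μ) :
    (∫⁻ w, g w * ψ w ∂μ) ^ p ≤
      (∫⁻ w, g w ^ p * ψ w ∂μ) * (∫⁻ w, ψ w ∂μ) ^ (p - 1) := by
  rcases eq_or_lt_of_le hp with hp1 | hp1
  · simp [← hp1]
  have hp0 : (0:ℝ) < p := lt_of_lt_of_le one_pos hp
  set q : ℝ := p / (p - 1) with hq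
  have hpq : p.HolderConjugate q := Real.HolderConjugate.conjExponent hp1
  have key := ENNReal.lintegral_mul_le_Lp_mul_Lq μ hpq
    (f := fun w => (g w ^ p * ψ w) ^ (1/p)) (g := fun w => ψ w ^ (1/q))
    ((hg.pow_const p |>.mul hψ).pow_const _) (hψ.pow_const _)
  have hppos : p ≠ 0 := hp0.ne'
  have hqpos : (0:ℝ) < q := hpq.symm.pos
  have heq : ∀ w, ((g w ^ p * ψ w) ^ (1/p)) * (ψ w ^ (1/q)) = g w * ψ w := by
    intro w
    rw [ENNReal.mul_rpow_of_nonneg _ _ (by positivity), ← ENNReal.rpow_mul,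
      mul_one_div_cancel hppos, ENNReal.rpow_one, mul_assoc,
      ← ENNReal.rpow_add_of_nonneg _ _ (by positivity) (by positivity),
      one_div, one_div, hpq.inv_add_inv_eq_one, ENNReal.rpow_one]
  have heq2 : ∀ w, ((g w ^ p * ψ w) ^ (1/p)) ^ p = g w ^ p * ψ w := by
    intro w
    rw [← ENNReal.rpow_mul, one_div_mul_cancel hppos, ENNReal.rpow_one]
  have heq3 : ∀ w, (ψ w ^ (1/q)) ^ q = ψ w := by
    intro w
    rw [← ENNReal.rpow_mul, one_div_mul_cancel hqpos.ne', ENNReal.rpow_one]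
  simp only [Pi.mul_apply, heq, heq2, heq3] at key
  calc (∫⁻ w, g w * ψ w ∂μ) ^ p
      ≤ ((∫⁻ w, g w ^ p * ψ w ∂μ) ^ (1/p) * (∫⁻ w, ψ w ∂μ) ^ (1/q)) ^ p :=
        ENNReal.rpow_le_rpow key hp0.le
    _ = (∫⁻ w, g w ^ p * ψ w ∂μ) * (∫⁻ w, ψ w ∂μ) ^ (p - 1) := by
        rw [ENNReal.mul_rpow_of_nonneg _ _ hp0.le, ← ENNReal.rpow_mul,
          ← ENNReal.rpow_mul, one_div_mul_cancel hppos, ENNReal.rpow_one]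
        congr 1
        rw [hq]
        field_simp

/-- lintegral of a dilated function w.r.t. an additive Haar measure -/
lemma lintegral_comp_smul' {E : Type*} [NormedAddCommGroup E] [NormedSpace ℝ E]
    [MeasurableSpace E] [BorelSpace E] [FiniteDimensional ℝ E]
    (μ : Measure E) [μ.IsAddHaarMeasure] (f : E → ℝ≥0∞) (hf : Measurable f)
    {r : ℝ} (hr : r ≠ 0) :
    ∫⁻ x, f (r • x) ∂μ
      = ENNReal.ofReal |(r ^ Module.finrank ℝ E)⁻¹| * ∫⁻ x, f x ∂μ := by
  rw [← lintegral_map hf (measurable_const_smul r), Measure.map_addHaar_smul μ hr,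
    lintegral_smul_measure, smul_eq_mul]

lemma lintegral_sub_left' {G : Type*} [MeasurableSpace G] [AddGroup G]
    [MeasurableAdd G] [MeasurableNeg G] (μ : Measure G) [μ.IsAddLeftInvariant]
    [μ.IsNegInvariant] (f : G → ℝ≥0∞) (hf : Measurable f) (c : G) :
    ∫⁻ x, f (c - x) ∂μ = ∫⁻ x, f x ∂μ := by
  have h1 : ∫⁻ x, f (c - x) ∂μ = ∫⁻ x, (fun y => f (c + y)) (-x) ∂μ := by
    simp_rw [sub_eq_add_neg]
  rw [h1, (Measure.measurePreserving_neg μ).lintegral_comp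
      (f := fun y => f (c + y)) (hf.comp (measurable_const_add c))]
  exact lintegral_add_left_eq_self f c

lemma two_pow_mul_ofReal_inv (k : ℕ) :
    (2:ℝ≥0∞) ^ k * ENNReal.ofReal (((2:ℝ) ^ k)⁻¹) = 1 := by
  rw [ENNReal.ofReal_inv_of_pos (by positivity), ENNReal.ofReal_pow (by norm_num)]
  norm_num
  exact ENNReal.mul_inv_cancel (by positivity) (by simp)

end Aux

section MD

variable {m d : ℕ}

/-- `diagPt` as a linear map. -/
def diagL (m d : ℕ) : EuclideanSpace ℝ (Fin d) →ₗ[ℝ] EuclideanSpace ℝ (Fin m × Fin d) where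
  toFun := diagPt
  map_add' x y := rfl
  map_smul' c x := rfl

lemma diagPt_continuous : Continuous (diagPt (m := m) (d := d)) :=
  (diagL m d).continuous_of_finiteDimensional

lemma diagPt_smul (r : ℝ) (x : EuclideanSpace ℝ (Fin d)) :
    r • diagPt (m := m) x = diagPt (r • x) := ((diagL m d).map_smul r x).symm

/-- the first block of `v`. -/
def blk0 (hm : 0 < m) (v : EuclideanSpace ℝ (Fin m × Fin d)) :
    EuclideanSpace ℝ (Fin d) := WithLp.toLp 2 (fun i => v (⟨0, hm⟩, i))

lemma norm_blk0_le (hm : 0 < m) (x : EuclideanSpace ℝ (Fin d))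
    (v : EuclideanSpace ℝ (Fin m × Fin d)) :
    ‖x - blk0 hm v‖ ≤ ‖diagPt x - v‖ := by
  set u : EuclideanSpace ℝ (Fin m × Fin d) := diagPt x - v with hu
  rw [EuclideanSpace.norm_eq, EuclideanSpace.norm_eq]
  apply Real.sqrt_le_sqrt
  have hsum : ∑ q : Fin m × Fin d, ‖u q‖ ^ 2
      = ∑ a : Fin m, ∑ i : Fin d, ‖u (a, i)‖ ^ 2 := Fintype.sum_prod_type _
  rw [hsum]
  have h0 : ∀ i : Fin d, ‖(x - blk0 hm v) i‖ ^ 2 = ‖u (⟨0, hm⟩, i)‖ ^ 2 := fun i => rfl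
  simp_rw [h0]
  exact Finset.single_le_sum (f := fun a : Fin m => ∑ i : Fin d, ‖u (a, i)‖ ^ 2)
    (fun a _ => Finset.sum_nonneg fun i _ => sq_nonneg _) (Finset.mem_univ _)


lemma schwartz_decay_bound {E : Type*} [NormedAddCommGroup E] [NormedSpace ℝ E]
    (Ψ : SchwartzMap E ℂ) (k : ℕ) :
    ∃ C : ℝ, 0 ≤ C ∧ ∀ z, ‖Ψ z‖ ≤ C * (1 + ‖z‖) ^ (-(k:ℝ)) := by
  refine ⟨2 ^ k * ((Finset.Iic (k,0)).sup fun m' => SchwartzMap.seminorm ℝ m'.1 m'.2) Ψ,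
    by positivity, fun z => ?_⟩
  have h := SchwartzMap.one_add_le_sup_seminorm_apply (𝕜 := ℝ) (m := (k, 0)) le_rfl le_rfl Ψ z
  rw [norm_iteratedFDeriv_zero] at h
  have hb : (0:ℝ) < 1 + ‖z‖ := by positivity
  rw [Real.rpow_neg hb.le, ← div_eq_mul_inv, le_div_iff₀ (by positivity),
    Real.rpow_natCast, mul_comm]
  exact h

lemma slice_bound (hm : 0 < m) (Ψ : SchwartzMap (EuclideanSpace ℝ (Fin m × Fin d)) ℂ) :
    ∃ A : ℝ≥0∞, A ≠ ⊤ ∧ ∀ v : EuclideanSpace ℝ (Fin m × Fin d),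
      (∫⁻ x : EuclideanSpace ℝ (Fin d), (‖Ψ (diagPt x - v)‖₊ : ℝ≥0∞)) ≤ A := by
  obtain ⟨C, hC0, hC⟩ := schwartz_decay_bound Ψ (d+1)
  set h : EuclideanSpace ℝ (Fin d) → ℝ := fun x => C * (1 + ‖x‖) ^ (-(((d+1:ℕ)):ℝ)) with hh
  refine ⟨∫⁻ x, ENNReal.ofReal (h x), ?_, ?_⟩
  · have hint : Integrable h :=
      (integrable_one_add_norm (E := EuclideanSpace ℝ (Fin d))
        (by rw [finrank_euclideanSpace, Fintype.card_fin]; push_cast; linarith)).const_mul C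
    refine ne_of_lt ?_
    calc ∫⁻ x, ENNReal.ofReal (h x) ≤ ∫⁻ x, (‖h x‖₊ : ℝ≥0∞) :=
          lintegral_mono fun x => Real.ofReal_le_enorm _
      _ < ⊤ := hint.2
  · intro v
    have hptw : ∀ x : EuclideanSpace ℝ (Fin d),
        (‖Ψ (diagPt x - v)‖₊ : ℝ≥0∞) ≤ ENNReal.ofReal (h (x - blk0 hm v)) := by
      intro x
      rw [← ENNReal.ofReal_coe_nnreal, coe_nnnorm]
      apply ENNReal.ofReal_le_ofReal
      refine (hC _).trans ?_
      rw [hh]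
      simp only []
      apply mul_le_mul_of_nonneg_left _ hC0
      apply Real.rpow_le_rpow_of_nonpos (by positivity) _ (by push_cast; linarith)
      have := norm_blk0_le hm x v
      linarith
    calc ∫⁻ x, (‖Ψ (diagPt x - v)‖₊ : ℝ≥0∞)
        ≤ ∫⁻ x, ENNReal.ofReal (h (x - blk0 hm v)) := lintegral_mono hptw
      _ = ∫⁻ x, ENNReal.ofReal (h x) := by
          have hmeas : Measurable fun x : EuclideanSpace ℝ (Fin d) => ENNReal.ofReal (h x) := by
            apply ENNReal.measurable_ofReal.comp
            apply Measurable.const_mul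
            exact ((continuous_const.add continuous_norm).rpow_const
              (fun x => Or.inl (ne_of_gt (add_pos_of_pos_of_nonneg one_pos (norm_nonneg _))))).measurable
          exact lintegral_sub_right_eq_self (fun x => ENNReal.ofReal (h x)) (blk0 hm v)

lemma nnnorm_dilate (Ψ : SchwartzMap (EuclideanSpace ℝ (Fin m × Fin d)) ℂ) (j : ℕ)
    (z : EuclideanSpace ℝ (Fin m × Fin d)) :
    (‖dilate (⇑Ψ) j z‖₊ : ℝ≥0∞)
      = 2 ^ (j * (m * d)) * (‖Ψ ((2:ℝ) ^ j • z)‖₊ : ℝ≥0∞) := by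
  rw [dilate, nnnorm_mul, ENNReal.coe_mul]
  congr 1
  rw [nnnorm_pow]
  norm_num


lemma psi_meas (Ψ : SchwartzMap (EuclideanSpace ℝ (Fin m × Fin d)) ℂ) :
    Measurable fun z => (‖Ψ z‖₊ : ℝ≥0∞) :=
  Ψ.continuous.nnnorm.measurable.coe_nnreal_ennreal

lemma psi_mass (Ψ : SchwartzMap (EuclideanSpace ℝ (Fin m × Fin d)) ℂ) (j : ℕ) :
    ∫⁻ z, (‖dilate (⇑Ψ) j z‖₊ : ℝ≥0∞) = ∫⁻ z, (‖Ψ z‖₊ : ℝ≥0∞) := by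
  simp_rw [nnnorm_dilate]
  have h1 : Measurable fun z : EuclideanSpace ℝ (Fin m × Fin d) =>
      (‖Ψ ((2:ℝ) ^ j • z)‖₊ : ℝ≥0∞) := (psi_meas Ψ).comp (measurable_const_smul _)
  rw [lintegral_const_mul _ h1,
    lintegral_comp_smul' volume _ (psi_meas Ψ) (by positivity)]
  rw [finrank_euclideanSpace, Fintype.card_prod, Fintype.card_fin, Fintype.card_fin]
  rw [← pow_mul, abs_inv, abs_of_pos (by positivity), ← mul_assoc,
    two_pow_mul_ofReal_inv, one_mul]

lemma dilate_slice (hm : 0 < m) (Ψ : SchwartzMap (EuclideanSpace ℝ (Fin m × Fin d)) ℂ)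
    {A : ℝ≥0∞}
    (hA : ∀ v, (∫⁻ x : EuclideanSpace ℝ (Fin d), (‖Ψ (diagPt x - v)‖₊ : ℝ≥0∞)) ≤ A)
    (j : ℕ) (w : EuclideanSpace ℝ (Fin m × Fin d)) :
    ∫⁻ x : EuclideanSpace ℝ (Fin d), (‖dilate (⇑Ψ) j (diagPt x - w)‖₊ : ℝ≥0∞)
      ≤ 2 ^ (j * ((m - 1) * d)) * A := by
  have hkey : ∀ x : EuclideanSpace ℝ (Fin d),
      (2:ℝ) ^ j • (diagPt x - w) = diagPt ((2:ℝ) ^ j • x) - (2:ℝ) ^ j • w := by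
    intro x; rw [smul_sub, diagPt_smul]
  have hfun_meas : Measurable fun y : EuclideanSpace ℝ (Fin d) =>
      (‖Ψ (diagPt y - (2:ℝ) ^ j • w)‖₊ : ℝ≥0∞) :=
    ((Ψ.continuous.comp (diagPt_continuous.sub continuous_const)).nnnorm).measurable.coe_nnreal_ennreal
  calc ∫⁻ x, (‖dilate (⇑Ψ) j (diagPt x - w)‖₊ : ℝ≥0∞)
      = 2 ^ (j * (m * d)) *
          ∫⁻ x, (‖Ψ (diagPt ((2:ℝ) ^ j • x) - (2:ℝ) ^ j • w)‖₊ : ℝ≥0∞) := by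
        simp_rw [nnnorm_dilate, hkey]
        have h1 : Measurable fun x : EuclideanSpace ℝ (Fin d) =>
            (‖Ψ (diagPt ((2:ℝ) ^ j • x) - (2:ℝ) ^ j • w)‖₊ : ℝ≥0∞) :=
          hfun_meas.comp (measurable_const_smul _)
        rw [lintegral_const_mul _ h1]
    _ = 2 ^ (j * (m * d)) * (ENNReal.ofReal |(((2:ℝ) ^ j) ^
          Module.finrank ℝ (EuclideanSpace ℝ (Fin d)))⁻¹| *
          ∫⁻ y, (‖Ψ (diagPt y - (2:ℝ) ^ j • w)‖₊ : ℝ≥0∞)) := by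
        rw [lintegral_comp_smul' volume _ hfun_meas (by positivity)]
    _ ≤ 2 ^ (j * (m * d)) * (ENNReal.ofReal (((2:ℝ) ^ (j * d))⁻¹) * A) := by
        rw [finrank_euclideanSpace, Fintype.card_fin, ← pow_mul, abs_inv,
          abs_of_pos (by positivity)]
        exact mul_le_mul_right (mul_le_mul_right (hA _) _) _
    _ = 2 ^ (j * ((m - 1) * d)) * A := by
        obtain ⟨m', rfl⟩ : ∃ m', m = m' + 1 := ⟨m - 1, (Nat.succ_pred_eq_of_pos hm).symm⟩
        have hsplit : j * ((m' + 1) * d) = j * ((m' + 1 - 1) * d) + j * d := by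
          simp; ring
        rw [hsplit, pow_add,
          show ∀ a b c A' : ℝ≥0∞, (a * b) * (c * A') = a * ((b * c) * A') from
            fun a b c A' => by ring,
          two_pow_mul_ofReal_inv, one_mul]


lemma dilate_meas (Ψ : SchwartzMap (EuclideanSpace ℝ (Fin m × Fin d)) ℂ) (j : ℕ) :
    Measurable fun z => (‖dilate (⇑Ψ) j z‖₊ : ℝ≥0∞) :=
  ((continuous_const.mul (Ψ.continuous.comp
    (continuous_const_smul _))).nnnorm).measurable.coe_nnreal_ennreal

lemma key_estimate (hm : 0 < m) {p : ℝ} (hp : 1 ≤ p)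
    (Ψ : SchwartzMap (EuclideanSpace ℝ (Fin m × Fin d)) ℂ)
    {A : ℝ≥0∞}
    (hAtop : A ≠ ⊤)
    (hA : ∀ v, (∫⁻ x : EuclideanSpace ℝ (Fin d), (‖Ψ (diagPt x - v)‖₊ : ℝ≥0∞)) ≤ A)
    (j : ℕ) (g : EuclideanSpace ℝ (Fin m × Fin d) → ℝ≥0∞) (hg : Measurable g) :
    ∫⁻ x : EuclideanSpace ℝ (Fin d),
        (∫⁻ w, g w * (‖dilate (⇑Ψ) j (diagPt x - w)‖₊ : ℝ≥0∞)) ^ p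
      ≤ (∫⁻ z, (‖Ψ z‖₊ : ℝ≥0∞)) ^ (p - 1) * (2 ^ (j * ((m - 1) * d)) * A)
          * ∫⁻ w, g w ^ p := by
  set φ : EuclideanSpace ℝ (Fin m × Fin d) → ℝ≥0∞ :=
    fun z => (‖dilate (⇑Ψ) j z‖₊ : ℝ≥0∞) with hφ
  have φ_meas : Measurable φ := dilate_meas Ψ j
  set K1 : ℝ≥0∞ := ∫⁻ z, (‖Ψ z‖₊ : ℝ≥0∞) with hK1
  have hK1top : K1 ≠ ⊤ := (Ψ.integrable (μ := volume)).2.ne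
  have hmass : ∀ x : EuclideanSpace ℝ (Fin d), ∫⁻ w, φ (diagPt x - w) = K1 := by
    intro x
    rw [lintegral_sub_left' volume φ φ_meas (diagPt x), hK1, hφ]
    exact psi_mass Ψ j
  have step1 : ∀ x : EuclideanSpace ℝ (Fin d),
      (∫⁻ w, g w * φ (diagPt x - w)) ^ p
        ≤ (∫⁻ w, g w ^ p * φ (diagPt x - w)) * K1 ^ (p - 1) := by
    intro x
    have := holder_weight volume hp g (fun w => φ (diagPt x - w)) hg.aemeasurable
      ((φ_meas.comp (measurable_id.const_sub (diagPt x)))).aemeasurable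
    rwa [hmass x] at this
  calc ∫⁻ x : EuclideanSpace ℝ (Fin d), (∫⁻ w, g w * φ (diagPt x - w)) ^ p
      ≤ ∫⁻ x : EuclideanSpace ℝ (Fin d),
          (∫⁻ w, g w ^ p * φ (diagPt x - w)) * K1 ^ (p - 1) :=
        lintegral_mono step1
    _ = (∫⁻ x : EuclideanSpace ℝ (Fin d), ∫⁻ w, g w ^ p * φ (diagPt x - w))
          * K1 ^ (p - 1) := lintegral_mul_const' _ _
            (ENNReal.rpow_ne_top_of_nonneg (by linarith) hK1top)
    _ = (∫⁻ w, ∫⁻ x : EuclideanSpace ℝ (Fin d), g w ^ p * φ (diagPt x - w))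
          * K1 ^ (p - 1) := by
        congr 1
        apply lintegral_lintegral_swap
        apply Measurable.aemeasurable
        exact ((hg.comp measurable_snd).pow_const p).mul (φ_meas.comp
          (((diagPt_continuous.measurable).comp measurable_fst).sub measurable_snd))
    _ = (∫⁻ w, g w ^ p * ∫⁻ x : EuclideanSpace ℝ (Fin d), φ (diagPt x - w))
          * K1 ^ (p - 1) := by
        congr 1
        refine lintegral_congr fun w => ?_
        exact lintegral_const_mul _ (φ_meas.comp (diagPt_continuous.measurable.sub
          measurable_const))
    _ ≤ (∫⁻ w, g w ^ p * (2 ^ (j * ((m - 1) * d)) * A)) * K1 ^ (p - 1) := by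
        refine mul_le_mul_left (lintegral_mono fun w => ?_) _
        exact mul_le_mul_right (dilate_slice hm Ψ hA j w) _
    _ = K1 ^ (p - 1) * (2 ^ (j * ((m - 1) * d)) * A) * ∫⁻ w, g w ^ p := by
        rw [lintegral_mul_const' _ _ (ENNReal.mul_ne_top
          (ENNReal.pow_ne_top (by norm_num)) hAtop)]
        ring

end MD

/-- slicing estimate for the diagonal restriction of `Ψ_j ∗ G`. -/
theorem diagonal_slicing (m d : ℕ) (hm : 2 ≤ m) (hd : 1 ≤ d)
    (p : ℝ) (hp : 1 ≤ p)
    (Ψ : SchwartzMap (EuclideanSpace ℝ (Fin m × Fin d)) ℂ) :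
    ∃ C : ℝ, 0 < C ∧
      ∀ (j : ℕ) (G : EuclideanSpace ℝ (Fin m × Fin d) → ℂ),
        MemLp G (ENNReal.ofReal p) volume →
        (∫⁻ x : EuclideanSpace ℝ (Fin d),
            (‖∫ w, G w * dilate (⇑Ψ) j (diagPt x - w)‖₊ : ℝ≥0∞) ^ p) ^ (1 / p)
          ≤ ENNReal.ofReal (C * 2 ^ ((j : ℝ) * ((m : ℝ) - 1) * d / p)) *
            eLpNorm G (ENNReal.ofReal p) volume := by
  have hm0 : 0 < m := by omega
  have hp0 : (0:ℝ) < p := by linarith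
  obtain ⟨A, hAtop, hA⟩ := slice_bound hm0 Ψ
  set K1 : ℝ≥0∞ := ∫⁻ z, (‖Ψ z‖₊ : ℝ≥0∞) with hK1
  have hK1top : K1 ≠ ⊤ := (Ψ.integrable (μ := volume)).2.ne
  set D : ℝ≥0∞ := (K1 ^ (p - 1) * A) ^ (1/p) with hD
  have hDtop : D ≠ ⊤ := ENNReal.rpow_ne_top_of_nonneg (by positivity)
    (ENNReal.mul_ne_top (ENNReal.rpow_ne_top_of_nonneg (by linarith) hK1top) hAtop)
  refine ⟨D.toReal + 1, by positivity, fun j G hG => ?_⟩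
  have hGm : AEMeasurable (fun w => (‖G w‖₊ : ℝ≥0∞)) volume := hG.aestronglyMeasurable.enorm
  set g0 := hGm.mk _ with hg0def
  have hg0meas : Measurable g0 := hGm.measurable_mk
  have hg0 : (fun w => (‖G w‖₊ : ℝ≥0∞)) =ᵐ[volume] g0 := hGm.ae_eq_mk
  set n := j * ((m - 1) * d) with hn
  set T : ℝ≥0∞ := ∫⁻ w, (‖G w‖₊ : ℝ≥0∞) ^ p with hT
  have hTcongr : (∫⁻ w, g0 w ^ p) = T := by
    rw [hT]
    exact lintegral_congr_ae (hg0.symm.mono fun w hw => by simp only [hw])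
  have Hp : (∫⁻ x : EuclideanSpace ℝ (Fin d),
        (‖∫ w, G w * dilate (⇑Ψ) j (diagPt x - w)‖₊ : ℝ≥0∞) ^ p)
      ≤ K1 ^ (p - 1) * (2 ^ n * A) * T := by
    have hx : ∀ x : EuclideanSpace ℝ (Fin d),
        (‖∫ w, G w * dilate (⇑Ψ) j (diagPt x - w)‖₊ : ℝ≥0∞)
          ≤ ∫⁻ w, g0 w * (‖dilate (⇑Ψ) j (diagPt x - w)‖₊ : ℝ≥0∞) := by
      intro x
      calc (‖∫ w, G w * dilate (⇑Ψ) j (diagPt x - w)‖₊ : ℝ≥0∞)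
          ≤ ∫⁻ w, (‖G w * dilate (⇑Ψ) j (diagPt x - w)‖₊ : ℝ≥0∞) :=
            enorm_integral_le_lintegral_enorm _
        _ = ∫⁻ w, (‖G w‖₊ : ℝ≥0∞) * (‖dilate (⇑Ψ) j (diagPt x - w)‖₊ : ℝ≥0∞) := by
            simp_rw [nnnorm_mul, ENNReal.coe_mul]
        _ = ∫⁻ w, g0 w * (‖dilate (⇑Ψ) j (diagPt x - w)‖₊ : ℝ≥0∞) :=
            lintegral_congr_ae (hg0.mono fun w hw => by simp only [hw])
    calc (∫⁻ x : EuclideanSpace ℝ (Fin d),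
          (‖∫ w, G w * dilate (⇑Ψ) j (diagPt x - w)‖₊ : ℝ≥0∞) ^ p)
        ≤ ∫⁻ x : EuclideanSpace ℝ (Fin d),
            (∫⁻ w, g0 w * (‖dilate (⇑Ψ) j (diagPt x - w)‖₊ : ℝ≥0∞)) ^ p :=
          lintegral_mono fun x => ENNReal.rpow_le_rpow (hx x) hp0.le
      _ ≤ K1 ^ (p - 1) * (2 ^ n * A) * ∫⁻ w, g0 w ^ p :=
          key_estimate hm0 hp Ψ hAtop hA j g0 hg0meas
      _ = K1 ^ (p - 1) * (2 ^ n * A) * T := by rw [hTcongr]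
  have Hroot := ENNReal.rpow_le_rpow Hp (one_div_nonneg.mpr hp0.le)
  refine le_trans Hroot ?_
  have hT1 : T ^ (1/p) = eLpNorm G (ENNReal.ofReal p) volume := by
    rw [eLpNorm_eq_lintegral_rpow_enorm_toReal
      (by simp only [ne_eq, ENNReal.ofReal_eq_zero, not_le]; linarith)
      ENNReal.ofReal_ne_top, ENNReal.toReal_ofReal hp0.le, hT]; rfl
  have h2 : ((2:ℝ≥0∞) ^ n) ^ (1/p)
      = ENNReal.ofReal (2 ^ ((j : ℝ) * ((m : ℝ) - 1) * d / p)) := by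
    have hexp : ((n:ℕ):ℝ) * (1/p) = (j:ℝ) * ((m:ℝ) - 1) * d / p := by
      rw [hn]
      push_cast [Nat.cast_sub (by omega : 1 ≤ m)]
      ring
    rw [← ENNReal.rpow_natCast 2 n, ← ENNReal.rpow_mul, hexp,
      ← ENNReal.ofReal_rpow_of_pos (x := 2) (by norm_num)]
    simp
  calc (K1 ^ (p - 1) * (2 ^ n * A) * T) ^ (1/p)
      = ((K1 ^ (p - 1) * A) * (2:ℝ≥0∞) ^ n * T) ^ (1/p) := by ring_nf
    _ = D * ((2:ℝ≥0∞) ^ n) ^ (1/p) * T ^ (1/p) := by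
        rw [ENNReal.mul_rpow_of_nonneg _ _ (one_div_nonneg.mpr hp0.le),
          ENNReal.mul_rpow_of_nonneg _ _ (one_div_nonneg.mpr hp0.le), hD]
    _ ≤ ENNReal.ofReal (D.toReal + 1) *
          ENNReal.ofReal (2 ^ ((j : ℝ) * ((m : ℝ) - 1) * d / p)) *
          eLpNorm G (ENNReal.ofReal p) volume := by
        rw [h2, hT1]
        refine mul_le_mul_left (mul_le_mul_left ?_ _) _
        exact le_trans (le_of_eq (ENNReal.ofReal_toReal hDtop).symm)
          (ENNReal.ofReal_le_ofReal (by linarith [ENNReal.toReal_nonneg (a := D)]))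
    _ = ENNReal.ofReal ((D.toReal + 1) * 2 ^ ((j : ℝ) * ((m : ℝ) - 1) * d / p)) *
          eLpNorm G (ENNReal.ofReal p) volume := by
        rw [ENNReal.ofReal_mul (by positivity)]

end
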